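/- arXiv:1011.3782 — 5 statements merged into one kernel-verified Lean document; each statement's English description precedes it below -/
import Mathlib

section
/- Let B be a nilpotent square matrix over ℝ and let P(z) = a_k z^k + a_{k+1} z^{k+1} + ... + a_m z^m be a polynomial with a_k ≠ 0 (so the lowest-order term has degree k). Then rank P(B) = rank B^k. -/
/-!
Factor `P = X ^ k * Q` and write `Q = a_k + X * R`. Since `B` is nilpotent, `Q(B) = a_k + B * R(B)`
is a unit plus a commuting nilpotent, hence invertible, and multiplying `B ^ k` by an invertible matrix
does not change its rank.
-/

namespace Polynomial

variable {R A : Type*} [CommRing R] [Ring A] [Algebra R A]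

theorem commute_aeval_self (a : A) (q : R[X]) : Commute a (aeval a q) := by
  show a * aeval a q = aeval a q * a
  simpa only [map_mul, aeval_X] using congrArg (aeval a) (X_mul : X * q = q * X)

theorem isUnit_aeval_of_isNilpotent {a : A} (ha : IsNilpotent a) {q : R[X]}
    (hq : IsUnit (q.coeff 0)) : IsUnit (aeval a q) := by
  have hsplit : aeval a q = algebraMap R A (q.coeff 0) + a * aeval a q.divX := by
    conv_lhs => rw [← X_mul_divX_add q]
    rw [map_add, map_mul, aeval_X, aeval_C, add_comm]
  rw [hsplit]
  exact ((commute_aeval_self a q.divX).isNilpotent_mul_right ha).isUnit_add_left_of_commute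
    (hq.map _) (Algebra.commutes _ _).symm

theorem exists_isUnit_aeval_eq_pow_mul_of_isNilpotent {a : A} (ha : IsNilpotent a) {p : R[X]}
    {k : ℕ} (hk : IsUnit (p.coeff k)) (hlow : ∀ i < k, p.coeff i = 0) :
    ∃ u : A, IsUnit u ∧ aeval a p = a ^ k * u := by
  obtain ⟨q, rfl⟩ := X_pow_dvd_iff.mpr hlow
  have hq0 : (X ^ k * q).coeff k = q.coeff 0 := by
    simpa only [zero_add] using coeff_X_pow_mul q k 0
  exact ⟨aeval a q, isUnit_aeval_of_isNilpotent ha (hq0 ▸ hk), by rw [map_mul, map_pow, aeval_X]⟩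

end Polynomial

theorem Matrix.rank_aeval_eq_rank_pow_of_isNilpotent {n K : Type*} [Fintype n] [DecidableEq n]
    [Field K] {B : Matrix n n K} (hB : IsNilpotent B) {p : Polynomial K} {k : ℕ}
    (hk : p.coeff k ≠ 0) (hlow : ∀ i < k, p.coeff i = 0) :
    (Polynomial.aeval B p).rank = (B ^ k).rank := by
  obtain ⟨U, hU, hpU⟩ :=
    Polynomial.exists_isUnit_aeval_eq_pow_mul_of_isNilpotent hB hk.isUnit hlow
  rw [hpU]
  exact rank_mul_eq_left_of_isUnit_det _ _ ((isUnit_iff_isUnit_det U).mp hU)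

theorem stmt_2 (n : ℕ) (B : Matrix (Fin n) (Fin n) ℝ) (hB : IsNilpotent B)
    (P : Polynomial ℝ) (k : ℕ) (hk : P.coeff k ≠ 0) (hlow : ∀ i < k, P.coeff i = 0) :
    (Polynomial.aeval B P).rank = (B ^ k).rank :=
  Matrix.rank_aeval_eq_rank_pow_of_isNilpotent hB hk hlow
end

section
/- Let Z be the (n+1)×(n+1) spectral differentiation matrix for distinct nodes x_0 < x_1 < ... < x_n, defined by Z_{jj} = ∑_{m≠j} 1/(x_j - x_m) and Z_{jk} = (π_j/π_k)·1/(x_j - x_k) for j ≠ k, where π_k = ∏_{m≠k}(x_k - x_m). Then Z^{n+1} = 0. -/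
open Polynomial Matrix

theorem stmt_7 (n : ℕ) (x : Fin (n + 1) → ℝ) (hx : StrictMono x) :
    (Matrix.of (fun j k : Fin (n + 1) =>
      Polynomial.eval (x j) (Polynomial.derivative (Lagrange.basis Finset.univ x k))))
      ^ (n + 1) = 0 := by
  set Z : Matrix (Fin (n+1)) (Fin (n+1)) ℝ := Matrix.of (fun j k : Fin (n + 1) =>
      Polynomial.eval (x j) (Polynomial.derivative (Lagrange.basis Finset.univ x k))) with hZ
  set V : Matrix (Fin (n+1)) (Fin (n+1)) ℝ := Matrix.vandermonde x with hV
  set D : Matrix (Fin (n+1)) (Fin (n+1)) ℝ :=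
    fun m i => if (m : ℕ) + 1 = (i : ℕ) then (i : ℕ) else 0 with hD
  have hinj : Function.Injective x := hx.injective
  have hVdet : V.det ≠ 0 := by
    rw [hV, Matrix.det_vandermonde]
    apply Finset.prod_ne_zero_iff.2
    intro i _
    apply Finset.prod_ne_zero_iff.2
    intro j hj
    rw [Finset.mem_Ioi] at hj
    exact sub_ne_zero.2 (fun h => absurd (hinj h) (ne_of_gt hj))
  -- Key: Z * V = V * D
  have key : Z * V = V * D := by
    ext j i
    have hdeg : ((X : ℝ[X]) ^ (i : ℕ)).degree < (Finset.univ : Finset (Fin (n+1))).card := by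
      simp [Polynomial.degree_X_pow]
      exact_mod_cast i.is_lt
    have hinterp : Lagrange.interpolate Finset.univ x
        (fun k => Polynomial.eval (x k) ((X : ℝ[X]) ^ (i : ℕ))) = (X : ℝ[X]) ^ (i : ℕ) :=
      (Lagrange.eq_interpolate (Set.injOn_of_injective hinj) hdeg).symm
    have hLHS : (Z * V) j i = Polynomial.eval (x j)
        (Polynomial.derivative ((X : ℝ[X]) ^ (i : ℕ))) := by
      rw [← hinterp, Lagrange.interpolate_apply, map_sum, Polynomial.eval_finset_sum]
      simp only [Matrix.mul_apply, hZ, hV, Matrix.vandermonde, Matrix.of_apply,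
        Polynomial.derivative_mul, Polynomial.derivative_C, zero_mul, zero_add,
        Polynomial.eval_mul, Polynomial.eval_C, Polynomial.eval_pow, Polynomial.eval_X]
      exact Finset.sum_congr rfl fun k _ => by ring
    rw [hLHS]
    have hRHS : (V * D) j i = if 1 ≤ (i : ℕ) then ((i : ℕ) : ℝ) * x j ^ ((i : ℕ) - 1) else 0 := by
      rw [Matrix.mul_apply]
      by_cases hi : 1 ≤ (i : ℕ)
      · rw [if_pos hi]
        have hm : ((i : ℕ) - 1) < n + 1 := by omega
        rw [Finset.sum_eq_single (⟨(i : ℕ) - 1, hm⟩ : Fin (n+1))]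
        · simp only [hV, hD, Matrix.vandermonde, Matrix.of_apply]
          rw [if_pos (show (i:ℕ) - 1 + 1 = (i:ℕ) by omega)]
          ring
        · intro b _ hb
          simp only [hD]
          rw [if_neg, mul_zero]
          intro h
          exact hb (Fin.ext (show (b:ℕ) = (i:ℕ) - 1 by omega))
        · simp
      · rw [if_neg hi]
        apply Finset.sum_eq_zero
        intro b _
        simp only [hD]
        rw [if_neg (by omega), mul_zero]
    rw [hRHS]
    rw [Polynomial.derivative_X_pow]
    by_cases hi : 1 ≤ (i : ℕ)
    · rw [if_pos hi]; simp
    · have : (i : ℕ) = 0 := by omega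
      rw [if_neg hi, this]
      simp
  -- D is nilpotent
  have hDpow : ∀ k : ℕ, ∀ m i : Fin (n+1), (i : ℕ) < (m : ℕ) + k → (D ^ k) m i = 0 := by
    intro k
    induction k with
    | zero =>
      intro m i h
      rw [pow_zero, Matrix.one_apply_ne]
      exact fun he => by omega
    | succ k ih =>
      intro m i h
      rw [pow_succ', Matrix.mul_apply]
      apply Finset.sum_eq_zero
      intro p _
      by_cases hp : (m : ℕ) + 1 = (p : ℕ)
      · rw [ih p i (by omega), mul_zero]
      · simp only [hD]
        rw [if_neg hp, zero_mul]
  have hDnil : D ^ (n + 1) = 0 := by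
    ext m i
    rw [hDpow (n+1) m i (by omega)]
    simp
  -- conclude
  have hu : IsUnit V := (Matrix.isUnit_iff_isUnit_det V).2 (isUnit_iff_ne_zero.2 hVdet)
  obtain ⟨u, hu⟩ := hu
  have hZeq : Z = (u : Matrix (Fin (n+1)) (Fin (n+1)) ℝ) * D * ((u⁻¹ : _ˣ) : Matrix (Fin (n+1)) (Fin (n+1)) ℝ) := by
    have h2 : Z * (u : Matrix (Fin (n+1)) (Fin (n+1)) ℝ) = (u : Matrix (Fin (n+1)) (Fin (n+1)) ℝ) * D := by rw [hu]; exact key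
    calc Z = Z * ((u : Matrix (Fin (n+1)) (Fin (n+1)) ℝ) * ↑u⁻¹) := by
            rw [Units.mul_inv]; rw [mul_one]
    _ = (Z * ↑u) * ↑u⁻¹ := by rw [mul_assoc]
    _ = _ := by rw [h2]
  rw [hZeq, Units.conj_pow, hDnil]
  simp
end

section
/- Let Z be the (n+1)×(n+1) spectral differentiation matrix for distinct nodes x_0,...,x_n (entries Z_{jk} = l_k'(x_j) where l_k are the Lagrange basis polynomials). Then rank Z = n. -/
open Polynomial

theorem stmt_8 (n : ℕ) (x : Fin (n + 1) → ℝ) (hx : Function.Injective x) :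
    (Matrix.of (fun j k : Fin (n + 1) =>
      Polynomial.eval (x j) (Polynomial.derivative (Lagrange.basis Finset.univ x k)))).rank
      = n := by
  classical
  have hinj : Set.InjOn x (Finset.univ : Finset (Fin (n+1))) := hx.injOn
  set Z := Matrix.of (fun j k : Fin (n + 1) =>
      Polynomial.eval (x j) (Polynomial.derivative (Lagrange.basis Finset.univ x k))) with hZ
  have hmul : ∀ (v : Fin (n+1) → ℝ) (j : Fin (n+1)), Z.mulVecLin v j =
      Polynomial.eval (x j) (Polynomial.derivative (Lagrange.interpolate Finset.univ x v)) := by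
    intro v j
    simp only [Matrix.mulVecLin_apply, Matrix.mulVec, dotProduct, hZ, Matrix.of_apply,
      Lagrange.interpolate_apply, Polynomial.derivative_sum, Polynomial.eval_finset_sum,
      Polynomial.derivative_C_mul, Polynomial.eval_mul, Polynomial.eval_C]
    exact Finset.sum_congr rfl fun k _ => mul_comm _ _
  have hker : LinearMap.ker Z.mulVecLin =
      Submodule.span ℝ {(fun _ => (1:ℝ) : Fin (n+1) → ℝ)} := by
    apply le_antisymm
    · intro v hv
      have hv' : ∀ j, Z.mulVecLin v j = 0 := by
        intro j; rw [LinearMap.mem_ker.mp hv]; rfl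
      set p := Lagrange.interpolate Finset.univ x v with hp
      have hdlt : (Polynomial.derivative p).degree < (Finset.univ : Finset (Fin (n+1))).card := by
        refine lt_of_le_of_lt (Polynomial.degree_derivative_le) ?_
        exact Lagrange.degree_interpolate_lt _ hinj
      have hd0 : Polynomial.derivative p = 0 := by
        refine Polynomial.eq_zero_of_degree_lt_of_eval_index_eq_zero _ hinj hdlt ?_
        intro i _
        rw [← hmul v i]; exact hv' i
      have hpc : p = Polynomial.C (p.coeff 0) := Polynomial.eq_C_of_derivative_eq_zero hd0
      have hvc : ∀ j, v j = p.coeff 0 := by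
        intro j
        have := Lagrange.eval_interpolate_at_node v hinj (Finset.mem_univ j)
        rw [← hp] at this
        rw [← this, hpc]; simp
      have : v = (p.coeff 0) • (fun _ => (1:ℝ)) := by
        funext j; simp [hvc j]
      rw [this]
      exact Submodule.smul_mem _ _ (Submodule.mem_span_singleton_self _)
    · rw [Submodule.span_le, Set.singleton_subset_iff]
      refine LinearMap.mem_ker.mpr ?_
      funext j
      rw [hmul]
      have : Lagrange.interpolate Finset.univ x (fun _ => (1:ℝ)) = 1 := by
        have := Lagrange.interpolate_one hinj (Finset.univ_nonempty)
        simpa [Pi.one_def] using this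
      simp [this]
  have hrank : Z.rank + Module.finrank ℝ (LinearMap.ker Z.mulVecLin) = n + 1 := by
    have := LinearMap.finrank_range_add_finrank_ker Z.mulVecLin
    simpa [Matrix.rank, Module.finrank_pi] using this
  have h1 : Module.finrank ℝ (LinearMap.ker Z.mulVecLin) = 1 := by
    rw [hker]
    exact finrank_span_singleton (by
      intro h
      have := congrFun h 0
      simp at this)
  omega
end

section
/- Let Z be the (n+1)×(n+1) spectral differentiation matrix for distinct nodes x_0,...,x_n, and let P(z) = a_k z^k + ... + a_m z^m be a real polynomial with a_k ≠ 0 and k ≤ n. Then rank P(Z) = n + 1 - k. -/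
/-!
In the Lagrange basis, `Z` is the matrix of `d/dx` on polynomials of degree `≤ n`, so the
Vandermonde matrix of the nodes conjugates it to the differentiation matrix `D` of the monomial
basis, and `P(Z)` to `P(D)`. The `(i, m)` entry of `D ^ j` is nonzero only for `m = i + j`, hence
`P(D)` vanishes below its `k`-th superdiagonal and is nonzero on it; such a matrix has rank
`n + 1 - k`.
-/

open Polynomial Matrix Finset

theorem SemiconjBy.aeval {R A : Type*} [CommSemiring R] [Semiring A] [Algebra R A] {a x y : A}
    (h : SemiconjBy a x y) (p : R[X]) : SemiconjBy a (aeval x p) (aeval y p) := by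
  induction p using Polynomial.induction_on' with
  | add p q hp hq => simpa only [map_add] using hp.add_right hq
  | monomial j r =>
    simp only [aeval_monomial]
    exact (show SemiconjBy a (algebraMap R A r) (algebraMap R A r) from
      (Algebra.commutes r a).symm).mul_right (h.pow_right j)

namespace Matrix

variable {K : Type*} [Field K] {N : ℕ}

theorem rank_eq_sub_of_superdiagonal (M : Matrix (Fin N) (Fin N) K) (k : ℕ)
    (hzero : ∀ i m : Fin N, (m : ℕ) < i + k → M i m = 0)
    (hdiag : ∀ i m : Fin N, (m : ℕ) = i + k → M i m ≠ 0) :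
    M.rank = N - k := by
  apply le_antisymm
  · calc M.rank ≤ #{i : Fin N | (i : ℕ) < N - k} := by
          refine M.rank_le_card_of_support_subset _ (Function.support_subset_iff'.mpr ?_)
          intro i hi
          ext m
          exact hzero i m (by simp at hi; omega)
      _ = N - k := by rw [Fin.card_filter_val_lt]; omega
  · let r : Fin (N - k) → Fin N := fun t => ⟨t, by omega⟩
    let c : Fin (N - k) → Fin N := fun t => ⟨t + k, by omega⟩
    have htri : (M.submatrix r c).IsUpperTriangular := fun t s hst =>
      hzero _ _ (by simp [r, c] at hst ⊢; omega)
    have hdet : IsUnit (M.submatrix r c).det := by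
      rw [isUnit_iff_ne_zero, det_of_isUpperTriangular htri]
      exact prod_ne_zero_iff.mpr fun t _ => hdiag _ _ rfl
    calc N - k = (M.submatrix r c).rank := by
          rw [rank_of_isUnit _ ((isUnit_iff_isUnit_det _).mpr hdet), Fintype.card_fin]
      _ ≤ M.rank := rank_submatrix_le M r c

end Matrix

section DerivativeMatrix

variable (R : Type*) [CommRing R] (N : ℕ)

/-- The matrix of `d/dX` on polynomials of degree `< N`, in the monomial basis. -/
def derivativeMatrix : Matrix (Fin N) (Fin N) R :=
  Matrix.of fun i m => if (i : ℕ) + 1 = m then (m : R) else 0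

variable {R N}

theorem derivativeMatrix_apply (i m : Fin N) :
    derivativeMatrix R N i m = if (i : ℕ) + 1 = m then (m : R) else 0 := rfl

theorem derivativeMatrix_pow_apply (j : ℕ) (i m : Fin N) :
    (derivativeMatrix R N ^ j) i m =
      if (i : ℕ) + j = m then ((m : ℕ).descFactorial j : R) else 0 := by
  induction j generalizing m with
  | zero => simp [one_apply, Fin.ext_iff]
  | succ j ih =>
    rw [pow_succ, mul_apply]
    by_cases hm : (m : ℕ) = 0
    · refine (sum_eq_zero fun t _ => ?_).trans (if_neg (by omega)).symm
      rw [derivativeMatrix_apply, if_neg (by omega), mul_zero]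
    rw [Fintype.sum_eq_single ⟨m - 1, by omega⟩ fun t ht => ?_]
    · simp only [ih, derivativeMatrix_apply, show (m : ℕ) - 1 + 1 = m by omega, if_true]
      by_cases h : (i : ℕ) + j = m - 1
      · rw [if_pos h, if_pos (by omega), ← Nat.succ_pred_eq_of_ne_zero hm,
          Nat.succ_descFactorial_succ]
        push_cast
        ring
      · rw [if_neg h, if_neg (by omega), zero_mul]
    · have : (t : ℕ) + 1 ≠ m := fun h => ht (Fin.ext (by simp; omega))
      rw [derivativeMatrix_apply, if_neg this, mul_zero]

theorem aeval_derivativeMatrix_apply (P : R[X]) (i m : Fin N) :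
    aeval (derivativeMatrix R N) P i m =
      if (i : ℕ) ≤ m then P.coeff (m - i) * ((m : ℕ).descFactorial (m - i) : R) else 0 := by
  simp only [aeval_eq_sum_range, Matrix.sum_apply, Matrix.smul_apply, derivativeMatrix_pow_apply,
    smul_eq_mul]
  split_ifs with him
  · rw [sum_eq_single (m - i : ℕ)]
    · rw [if_pos (by omega)]
    · intro j _ hj
      rw [if_neg (by omega), mul_zero]
    · intro hj
      rw [coeff_eq_zero_of_natDegree_lt (by simp at hj; omega), zero_mul]
  · exact sum_eq_zero fun j _ => by rw [if_neg (by omega), mul_zero]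

theorem vandermonde_mul_derivativeMatrix_apply (x : Fin N → R) (j m : Fin N) :
    (vandermonde x * derivativeMatrix R N) j m = (derivative (X ^ (m : ℕ))).eval (x j) := by
  have hdeg : (derivative (X ^ (m : ℕ) : R[X])).natDegree < N :=
    (natDegree_derivative_le _).trans_lt (by have := natDegree_X_pow_le (R := R) m; omega)
  rw [eval_eq_sum_range' hdeg, mul_apply, ← Fin.sum_univ_eq_sum_range]
  refine sum_congr rfl fun t _ => ?_
  rw [vandermonde_apply, derivativeMatrix_apply, coeff_derivative, coeff_X_pow]
  split_ifs with h
  · rw [← h]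
    push_cast
    ring
  · simp

end DerivativeMatrix

theorem rank_aeval_derivativeMatrix {K : Type*} [Field K] [CharZero K] {N : ℕ} (P : K[X])
    (k : ℕ) (hk : P.coeff k ≠ 0) (hlow : ∀ i < k, P.coeff i = 0) :
    (aeval (derivativeMatrix K N) P).rank = N - k := by
  refine rank_eq_sub_of_superdiagonal _ k (fun i m hm => ?_) (fun i m hm => ?_)
  · rw [aeval_derivativeMatrix_apply]
    split_ifs
    · rw [hlow _ (by omega), zero_mul]
    · rfl
  · rw [aeval_derivativeMatrix_apply, if_pos (by omega), show (m : ℕ) - i = k by omega]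
    refine mul_ne_zero hk (Nat.cast_ne_zero.mpr ?_)
    exact Nat.descFactorial_eq_zero_iff_lt.not.mpr (by omega)

theorem Lagrange.derivative_eq_sum_eval_mul_derivative_basis {F ι : Type*} [Field F]
    [DecidableEq ι] {s : Finset ι} {v : ι → F} (hvs : Set.InjOn v s) {p : F[X]}
    (hp : p.degree < #s) :
    derivative p = ∑ i ∈ s, C (p.eval (v i)) * derivative (Lagrange.basis s v i) := by
  conv_lhs => rw [Lagrange.eq_interpolate hvs hp, Lagrange.interpolate_apply]
  simp only [derivative_sum, derivative_C_mul]

section SpectralDifferentiation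

variable {F : Type*} [Field F] {N : ℕ}

noncomputable def spectralDiffMatrix (x : Fin N → F) : Matrix (Fin N) (Fin N) F :=
  Matrix.of fun j k => (derivative (Lagrange.basis univ x k)).eval (x j)

theorem semiconjBy_vandermonde_derivativeMatrix {x : Fin N → F} (hx : Function.Injective x) :
    SemiconjBy (vandermonde x) (derivativeMatrix F N) (spectralDiffMatrix x) := by
  ext j m
  have hdeg : (X ^ (m : ℕ) : F[X]).degree < #(univ : Finset (Fin N)) := by simp
  rw [vandermonde_mul_derivativeMatrix_apply, mul_apply,
    Lagrange.derivative_eq_sum_eval_mul_derivative_basis hx.injOn hdeg, eval_finsetSum]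
  simp [spectralDiffMatrix, vandermonde_apply, mul_comm]

end SpectralDifferentiation

theorem stmt_9_general (n : ℕ) (x : Fin (n + 1) → ℝ) (hx : Function.Injective x)
    (P : Polynomial ℝ) (k : ℕ) (hk : P.coeff k ≠ 0) (hlow : ∀ i < k, P.coeff i = 0) :
    (Polynomial.aeval (Matrix.of (fun j k : Fin (n + 1) =>
      Polynomial.eval (x j) (Polynomial.derivative (Lagrange.basis Finset.univ x k)))) P).rank
      = n + 1 - k := by
  have hV : (vandermonde x).det ≠ 0 := det_vandermonde_ne_zero_iff.mpr hx
  have hsemi := (semiconjBy_vandermonde_derivativeMatrix hx).aeval P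
  change (aeval (spectralDiffMatrix x) P).rank = _
  rw [← rank_mul_eq_left_of_det_ne_zero _ _ hV, ← hsemi.eq,
    rank_mul_eq_right_of_det_ne_zero _ _ hV]
  exact rank_aeval_derivativeMatrix P k hk hlow

theorem stmt_9 (n : ℕ) (x : Fin (n + 1) → ℝ) (hx : Function.Injective x)
    (P : Polynomial ℝ) (k : ℕ) (hk : P.coeff k ≠ 0) (hlow : ∀ i < k, P.coeff i = 0)
    (hkn : k ≤ n) :
    (Polynomial.aeval (Matrix.of (fun j k : Fin (n + 1) =>
      Polynomial.eval (x j) (Polynomial.derivative (Lagrange.basis Finset.univ x k)))) P).rank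
      = n + 1 - k :=
  stmt_9_general n x hx P k hk hlow
end

section
/- More generally, for every natural number p and each j ∈ {0,...,n}, the p-th derivative of the Lagrange basis polynomial l_j satisfies l_j^{(p)}(x) = ∑_{m=0}^n [Z^p]_{mj} l_m(x) for all x, where Z is the differentiation matrix Z_{jk} = l_k'(x_j). -/
/-!
Differentiation maps the span of the Lagrange basis `ℓ₀, …, ℓₙ` (the polynomials of degree `≤ n`)
into itself, and the coordinates of `ℓ_b'` in that basis are its values `ℓ_b'(x_a)` at the nodes.
So `Z` is the matrix of differentiation in the Lagrange basis, and `Z ^ p` that of the `p`-th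
derivative.
-/

open Polynomial Finset

namespace Lagrange

variable {F ι : Type*} [Field F] [Fintype ι] [DecidableEq ι] {v : ι → F}

noncomputable def differentiationMatrix (v : ι → F) : Matrix ι ι F :=
  Matrix.of fun a b => (derivative (Lagrange.basis univ v b)).eval (v a)

lemma degree_derivative_basis_lt (hv : Function.Injective v) (b : ι) :
    (derivative (Lagrange.basis univ v b)).degree < Fintype.card ι := by
  calc (derivative (Lagrange.basis univ v b)).degree
      < (Lagrange.basis univ v b).degree :=
        degree_derivative_lt (basis_ne_zero hv.injOn (mem_univ b))
    _ = ↑(Fintype.card ι - 1) := degree_basis hv.injOn (mem_univ b)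
    _ ≤ Fintype.card ι := mod_cast Nat.sub_le _ _

lemma derivative_basis (hv : Function.Injective v) (b : ι) :
    derivative (Lagrange.basis univ v b) =
      ∑ a, C (differentiationMatrix v a b) * Lagrange.basis univ v a := by
  rw [eq_interpolate hv.injOn (degree_derivative_basis_lt hv b), interpolate_apply]
  rfl

lemma iterate_derivative_basis (hv : Function.Injective v) (p : ℕ) (b : ι) :
    derivative^[p] (Lagrange.basis univ v b) =
      ∑ a, C ((differentiationMatrix v ^ p) a b) * Lagrange.basis univ v a := by
  induction p with
  | zero =>
    simp [Matrix.one_apply]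
  | succ p ih =>
    rw [Function.iterate_succ_apply', ih, pow_succ']
    simp only [derivative_C_mul, derivative_basis hv, Matrix.mul_apply, map_sum,
      mul_sum, sum_mul]
    rw [sum_comm]
    refine sum_congr rfl fun m _ => sum_congr rfl fun a _ => ?_
    rw [C_mul]
    ring

end Lagrange

theorem stmt_11 (n : ℕ) (x : Fin (n + 1) → ℝ) (hx : Function.Injective x)
    (p : ℕ) (j : Fin (n + 1)) (t : ℝ) :
    Polynomial.eval t (Polynomial.derivative^[p] (Lagrange.basis Finset.univ x j)) =
      ∑ m : Fin (n + 1),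
        ((Matrix.of (fun a b : Fin (n + 1) =>
          Polynomial.eval (x a) (Polynomial.derivative (Lagrange.basis Finset.univ x b))))
          ^ p) m j * Polynomial.eval t (Lagrange.basis Finset.univ x m) := by
  rw [Lagrange.iterate_derivative_basis hx, eval_finsetSum]
  simp only [eval_mul, eval_C]
  rfl
end
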